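/- arXiv:0704.2149 — 4 statements merged into one kernel-verified Lean document; each statement's English description precedes it below -/
import Mathlib

section
/- Let h(X) = 1 + b_1 X + b_2 X² + … be a formal power series over ℂ and let g := X^{−1}·h(X), a formal Laurent series. For n ≥ 1 define the polynomial Φ_n(u) := 𝒬_n(b_1 − u, b_2, …, b_n), i.e. the n-th Faber polynomial of the series 1 + (b_1−u)X + b_2X² + … over the ring ℂ[u]; Φ_n is a polynomial of degree n in u. Then the Laurent series Φ_n(g), obtained by evaluating the polynomial Φ_n at g, satisfies: its coefficient at X^{−n} equals 1, and its coefficient at X^{−m} equals 0 for every integer m with 0 ≤ m < n. (In the classical notation z = X^{−1}, g(z) = z·h(1/z) = z + b_1 + b_2 z^{−1} + …, this says Φ_n(g(z)) = z^n + ∑_{k>0} β_{nk} z^{−k} for suitable coefficients β_{nk}.) -/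
open PowerSeries Finset

/-- The power series `h(X) = 1 + b₁ X + b₂ X² + ⋯` attached to a sequence `b`. -/
noncomputable def hSeries {R : Type*} [CommRing R] (b : ℕ → R) : PowerSeries R :=
  PowerSeries.mk fun n => if n = 0 then 1 else b n

/-- The Faber polynomials `𝒬ₙ(b)`, defined by
`−X·h'(X)/h(X) = ∑_{n≥1} 𝒬ₙ(b) Xⁿ` where `h(X) = 1 + b₁X + b₂X² + ⋯`; the inverse
`1/h` exists since the constant term of `h` is `1`. -/
noncomputable def faberQ {R : Type*} [CommRing R] (b : ℕ → R) (n : ℕ) : R :=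
  PowerSeries.coeff n
    (-(PowerSeries.X * (hSeries b).derivativeFun) * (hSeries b).invOfUnit 1)

/-- The polynomial `Φₙ(u) := 𝒬ₙ(b₁ − u, b₂, …, bₙ)`, the `n`-th Faber polynomial of
the series `1 + (b₁ − u)X + b₂X² + ⋯` over the polynomial ring `ℂ[u]`. -/
noncomputable def faberPhi (b : ℕ → ℂ) (n : ℕ) : Polynomial ℂ :=
  faberQ (fun j => if j = 1 then Polynomial.C (b 1) - Polynomial.X else Polynomial.C (b j)) n

/-!
Put `z = X⁻¹` in `ℂ⸨X⸩`, so that `g = z h(X)`. By definition `Φₙ(g)` is the `n`-th Faber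
polynomial of `H(Y) = h(Y) - g Y`, and since `X h(Y) - Y h(X)` vanishes at `Y = X`,
`H(Y) = (1 - z Y) E(X, Y)` with `E = (X h(Y) - Y h(X)) / (X - Y) ∈ ℂ⟦X⟧⟦Y⟧` and `E ≡ 1 mod X`.
The operator `f ↦ -Y f'/f` turns this product into a sum, so `Φₙ(g) = zⁿ + dₙ(X)`, where
`dₙ` is the `Yⁿ`-coefficient of `-Y E_Y / E`: a power series in `X` without constant term,
because `E ≡ 1 mod X`.
-/

namespace PowerSeries

variable {R S : Type*} [CommRing R] [CommRing S]

/-- `-X f'/f`, meaningful only when `constantCoeff f = 1`: otherwise `f.invOfUnit 1` is junk. -/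
noncomputable def negXLogDeriv (f : R⟦X⟧) : R⟦X⟧ :=
  -(X * d⁄dX R f) * f.invOfUnit 1

theorem invOfUnit_one_eq_of_mul_eq_one {f g : R⟦X⟧} (hf : constantCoeff f = 1)
    (h : f * g = 1) : f.invOfUnit 1 = g :=
  left_inv_eq_right_inv (invOfUnit_mul f 1 (by simp [hf])) h

theorem invOfUnit_one_mul {f g : R⟦X⟧} (hf : constantCoeff f = 1) (hg : constantCoeff g = 1) :
    (f * g).invOfUnit 1 = f.invOfUnit 1 * g.invOfUnit 1 := by
  refine invOfUnit_one_eq_of_mul_eq_one (by simp [hf, hg]) ?_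
  rw [mul_mul_mul_comm, mul_invOfUnit f 1 (by simp [hf]), mul_invOfUnit g 1 (by simp [hg]),
    one_mul]

theorem constantCoeff_map (φ : R →+* S) (f : R⟦X⟧) :
    constantCoeff (map φ f) = φ (constantCoeff f) :=
  MvPowerSeries.constantCoeff_map φ f

theorem map_invOfUnit_one (φ : R →+* S) {f : R⟦X⟧} (hf : constantCoeff f = 1) :
    map φ (f.invOfUnit 1) = (map φ f).invOfUnit 1 := by
  refine (invOfUnit_one_eq_of_mul_eq_one (by rw [constantCoeff_map, hf, map_one]) ?_).symm
  rw [← map_mul, mul_invOfUnit f 1 (by simp [hf]), map_one]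

theorem invOfUnit_one_sub_C_mul_X (a : R) :
    (1 - C a * X).invOfUnit 1 = mk (a ^ ·) := by
  refine invOfUnit_one_eq_of_mul_eq_one (by simp) ?_
  have := congrArg (rescale a) (mk_one_mul_one_sub_eq_one R)
  simpa only [map_mul, map_sub, map_one, rescale_X, rescale_mk, Pi.one_apply, mul_one,
    mul_comm] using this

theorem map_derivative (φ : R →+* S) (f : R⟦X⟧) :
    map φ (d⁄dX R f) = d⁄dX S (map φ f) := by
  ext n
  simp [coeff_derivative, coeff_map]

theorem negXLogDeriv_one : negXLogDeriv (1 : R⟦X⟧) = 0 := by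
  simp [negXLogDeriv]

theorem negXLogDeriv_mul {f g : R⟦X⟧} (hf : constantCoeff f = 1) (hg : constantCoeff g = 1) :
    negXLogDeriv (f * g) = negXLogDeriv f + negXLogDeriv g := by
  simp only [negXLogDeriv, invOfUnit_one_mul hf hg, Derivation.leibniz, smul_eq_mul]
  linear_combination (-(X * d⁄dX R g * g.invOfUnit 1)) * mul_invOfUnit f 1 (by simp [hf]) +
    (-(X * d⁄dX R f * f.invOfUnit 1)) * mul_invOfUnit g 1 (by simp [hg])

theorem map_negXLogDeriv (φ : R →+* S) {f : R⟦X⟧} (hf : constantCoeff f = 1) :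
    map φ (negXLogDeriv f) = negXLogDeriv (map φ f) := by
  simp only [negXLogDeriv, map_mul, map_neg, map_X, map_derivative, map_invOfUnit_one φ hf]

theorem coeff_negXLogDeriv_one_sub_C_mul_X (a : R) {n : ℕ} (hn : n ≠ 0) :
    coeff n (negXLogDeriv (1 - C a * X)) = a ^ n := by
  obtain ⟨k, rfl⟩ := Nat.exists_eq_succ_of_ne_zero hn
  simp [negXLogDeriv, invOfUnit_one_sub_C_mul_X, mul_assoc, coeff_succ_X_mul, pow_succ']

end PowerSeries

section FaberQ

variable {R S : Type*} [CommRing R] [CommRing S]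

theorem coeff_hSeries (b : ℕ → R) (n : ℕ) : coeff n (hSeries b) = if n = 0 then 1 else b n :=
  coeff_mk _ _

theorem constantCoeff_hSeries (b : ℕ → R) : constantCoeff (hSeries b) = 1 := by
  simp [← coeff_zero_eq_constantCoeff_apply, coeff_hSeries]

theorem map_hSeries (φ : R →+* S) (b : ℕ → R) :
    map φ (hSeries b) = hSeries fun j => φ (b j) := by
  ext n
  simp [coeff_hSeries, coeff_map, apply_ite φ]

theorem hSeries_sub_C_mul_X (b : ℕ → R) (u : R) :
    hSeries (fun j => if j = 1 then b 1 - u else b j) = hSeries b - C u * X := by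
  ext (_ | _ | j) <;> simp [coeff_hSeries, constantCoeff_hSeries]

theorem faberQ_eq_coeff_negXLogDeriv (b : ℕ → R) (n : ℕ) :
    faberQ b n = coeff n (negXLogDeriv (hSeries b)) :=
  rfl

theorem faberQ_map (φ : R →+* S) (b : ℕ → R) (n : ℕ) :
    φ (faberQ b n) = faberQ (fun j => φ (b j)) n := by
  rw [faberQ_eq_coeff_negXLogDeriv, ← coeff_map, map_negXLogDeriv φ (constantCoeff_hSeries b),
    map_hSeries, faberQ_eq_coeff_negXLogDeriv]

end FaberQ

section DiffQuot

variable {R : Type*} [CommRing R]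

noncomputable def tailSeries (b : ℕ → R) (k : ℕ) : R⟦X⟧ :=
  mk fun i => b (k + i)

theorem tailSeries_eq_C_add_X_mul (b : ℕ → R) (k : ℕ) :
    tailSeries b k = C (b k) + X * tailSeries b (k + 1) := by
  ext (_ | i)
  · simp [tailSeries]
  · simp [tailSeries, coeff_succ_X_mul, Nat.add_comm 1 i, Nat.add_assoc]

theorem hSeries_eq_one_add_X_mul_tailSeries (b : ℕ → R) :
    hSeries b = 1 + X * tailSeries b 1 := by
  ext (_ | i)
  · simp [coeff_hSeries]
  · simp [coeff_hSeries, tailSeries, coeff_succ_X_mul, Nat.add_comm 1 i]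

/-- `E(X, Y) = (X h(Y) - Y h(X)) / (X - Y)`, as a power series in `Y` over `R⟦X⟧`. -/
noncomputable def hSeriesDiffQuot (b : ℕ → R) : R⟦X⟧⟦X⟧ :=
  hSeries fun k => -(X * tailSeries b (k + 1))

theorem constantCoeff_hSeriesDiffQuot (b : ℕ → R) : constantCoeff (hSeriesDiffQuot b) = 1 :=
  constantCoeff_hSeries _

theorem C_X_mul_map_C_hSeries_sub (b : ℕ → R) :
    C X * map C (hSeries b) - C (hSeries b) * X = (C X - X) * hSeriesDiffQuot b := by
  rw [sub_mul, mul_comm X]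
  refine PowerSeries.ext fun k => ?_
  rcases k with _ | _ | k <;>
    simp only [hSeriesDiffQuot, map_sub, coeff_C_mul, coeff_map, coeff_succ_mul_X,
      coeff_zero_mul_X, coeff_C, coeff_hSeries, reduceIte, Nat.add_eq_zero_iff, one_ne_zero,
      and_false]
  · simp
  · rw [hSeries_eq_one_add_X_mul_tailSeries, tailSeries_eq_C_add_X_mul b 1]
    ring
  · rw [tailSeries_eq_C_add_X_mul b (k + 2)]
    ring

theorem map_constantCoeff_hSeriesDiffQuot (b : ℕ → R) :
    map constantCoeff (hSeriesDiffQuot b) = 1 := by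
  refine PowerSeries.ext fun k => ?_
  rcases k with _ | k <;> simp [hSeriesDiffQuot, coeff_hSeries, coeff_map, coeff_one]

theorem constantCoeff_coeff_negXLogDeriv_hSeriesDiffQuot (b : ℕ → R) (n : ℕ) :
    constantCoeff (coeff n (negXLogDeriv (hSeriesDiffQuot b))) = 0 := by
  rw [← coeff_map, map_negXLogDeriv _ (constantCoeff_hSeriesDiffQuot b),
    map_constantCoeff_hSeriesDiffQuot, negXLogDeriv_one, map_zero]

end DiffQuot

section Laurent

open HahnSeries (single ofPowerSeries ofPowerSeries_X single_mul_single single_zero_one)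

variable {R : Type*} [CommRing R]

theorem single_neg_one_mul_ofPowerSeries_X :
    (single (-1) 1 : LaurentSeries R) * ofPowerSeries ℤ R X = 1 := by
  rw [ofPowerSeries_X, single_mul_single, neg_add_cancel, one_mul, single_zero_one]

theorem ofPowerSeries_comp_C_eq_algebraMap :
    (ofPowerSeries ℤ R).comp (C (R := R)) = algebraMap R (LaurentSeries R) :=
  RingHom.ext fun r => (HahnSeries.algebraMap_apply' (Γ := ℤ) r).symm

theorem map_algebraMap_hSeries_sub (b : ℕ → R) :
    map (algebraMap R (LaurentSeries R)) (hSeries b) -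
        C (single (-1) 1 * ofPowerSeries ℤ R (hSeries b)) * X =
      (1 - C (single (-1) 1) * X) * map (ofPowerSeries ℤ R) (hSeriesDiffQuot b) := by
  have h := congrArg (fun F => C (single (-1) 1 : LaurentSeries R) * map (ofPowerSeries ℤ R) F)
    (C_X_mul_map_C_hSeries_sub b)
  have hzX : C (single (-1) 1 : LaurentSeries R) * C (ofPowerSeries ℤ R X) = 1 := by
    rw [← map_mul, single_neg_one_mul_ofPowerSeries_X, map_one]
  simp only [map_sub, map_mul, map_C, map_X] at h
  rw [← ofPowerSeries_comp_C_eq_algebraMap, map_comp, RingHom.comp_apply, map_mul C]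
  linear_combination h + (map (ofPowerSeries ℤ R) (hSeriesDiffQuot b) -
    map (ofPowerSeries ℤ R) (map C (hSeries b))) * hzX

theorem faberQ_sub_eq_single_add_ofPowerSeries (b : ℕ → R) {n : ℕ} (hn : n ≠ 0) :
    faberQ (fun j => if j = 1
        then algebraMap R (LaurentSeries R) (b 1) - single (-1) 1 * ofPowerSeries ℤ R (hSeries b)
        else algebraMap R (LaurentSeries R) (b j)) n =
      single (-(n : ℤ)) 1 + ofPowerSeries ℤ R (coeff n (negXLogDeriv (hSeriesDiffQuot b))) := by
  have hE : constantCoeff (map (ofPowerSeries ℤ R) (hSeriesDiffQuot b)) = 1 := by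
    rw [constantCoeff_map, constantCoeff_hSeriesDiffQuot, map_one]
  rw [faberQ_eq_coeff_negXLogDeriv, hSeries_sub_C_mul_X (fun j => algebraMap R _ (b j)),
    ← map_hSeries, map_algebraMap_hSeries_sub, negXLogDeriv_mul (by simp) hE, map_add,
    coeff_negXLogDeriv_one_sub_C_mul_X _ hn,
    ← map_negXLogDeriv _ (constantCoeff_hSeriesDiffQuot b), coeff_map, HahnSeries.single_pow,
    one_pow, nsmul_eq_mul, mul_neg_one]

end Laurent

theorem aeval_faberPhi (b : ℕ → ℂ) (n : ℕ) (g : LaurentSeries ℂ) :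
    Polynomial.aeval g (faberPhi b n) =
      faberQ (fun j => if j = 1 then algebraMap ℂ _ (b 1) - g else algebraMap ℂ _ (b j)) n := by
  rw [faberPhi, ← AlgHom.coe_toRingHom, faberQ_map]
  congr 1
  ext j
  split_ifs <;> simp

/-- For `h(X) = 1 + b₁X + b₂X² + ⋯` and the formal Laurent series
`g = X⁻¹·h(X)` (classically `g(z) = z·h(1/z) = z + b₁ + b₂z⁻¹ + ⋯` with `z = X⁻¹`),
the Laurent series `Φₙ(g)` has coefficient `1` at `X^{−n}` and coefficient `0`
at `X^{−m}` for every `0 ≤ m < n`; i.e. `Φₙ(g(z)) = zⁿ + ∑_{k>0} βₙₖ z^{−k}`. -/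
theorem faberPhi_eval_laurent (b : ℕ → ℂ) (n : ℕ) (hn : 1 ≤ n) :
    (Polynomial.aeval
        ((HahnSeries.single (-1 : ℤ) (1 : ℂ) : LaurentSeries ℂ) *
          (HahnSeries.ofPowerSeries ℤ ℂ (hSeries b)))
        (faberPhi b n)).coeff (-(n : ℤ)) = 1 ∧
    ∀ m : ℕ, m < n →
      (Polynomial.aeval
          ((HahnSeries.single (-1 : ℤ) (1 : ℂ) : LaurentSeries ℂ) *
            (HahnSeries.ofPowerSeries ℤ ℂ (hSeries b)))
          (faberPhi b n)).coeff (-(m : ℤ)) = 0 := by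
  have hconst := constantCoeff_coeff_negXLogDeriv_hSeriesDiffQuot b n
  rw [aeval_faberPhi, faberQ_sub_eq_single_add_ofPowerSeries b (by omega)]
  refine ⟨?_, fun m hm => ?_⟩
  · rw [HahnSeries.coeff_add, HahnSeries.coeff_single_same, PowerSeries.coeff_coe,
      if_pos (by omega), add_zero]
  · rw [HahnSeries.coeff_add, HahnSeries.coeff_single_of_ne (by omega), zero_add,
      PowerSeries.coeff_coe]
    split_ifs with hm0
    · rfl
    · obtain rfl : m = 0 := by omega
      simpa using hconst
end

section
/- Let R be a commutative ring, f(ξ) = ∑_{n≥0} A_n ξ^n a formal power series over R, and θ(z) = ∑_{j≥1} c_j z^j a formal power series over R with zero constant term. Then for every n ≥ 0, the coefficient of z^n in the composition f(θ(z)) equals ∑_{m: ‖m‖ = n} A_{|m|} · (|m|!/∏_j m_j!) · c^m, where the sum is over all finitely supported sequences m = (m_1, m_2, …) of nonnegative integers with ‖m‖ = n (the coefficient |m|!/∏_j m_j! is the multinomial coefficient, an integer). -/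
/-!
Only `c₁, …, cₙ` affect the coefficient of `zⁿ` in `θᵏ`, so `θ` may be replaced by the
polynomial `∑_{1 ≤ j ≤ n} cⱼ zʲ`. The multinomial theorem expands its `k`-th power as
`∑_{|m| = k} (k! / ∏ mⱼ!) c^m z^{‖m‖}`, and collecting the terms `A_k θᵏ` over
`k ≤ n` regroups the coefficient of `zⁿ` into the sum over all `m` with `‖m‖ = n`.
-/

open PowerSeries Finset

/-- Formal composition `f(θ(z))` of power series, for `θ` with zero constant term:
the `n`-th coefficient of `∑ₖ Aₖ θᵏ`. Only terms with `k ≤ n` contribute when the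
constant term of `θ` vanishes. -/
noncomputable def compPS {R : Type*} [CommRing R] (f θ : PowerSeries R) : PowerSeries R :=
  PowerSeries.mk fun n => ∑ k ∈ Finset.range (n + 1),
    PowerSeries.coeff k f * PowerSeries.coeff n (θ ^ k)

theorem Finset.sum_pow_eq_sum_finsuppAntidiag {α R : Type*} [DecidableEq α] [CommSemiring R]
    (s : Finset α) (f : α → R) (k : ℕ) :
    (∑ i ∈ s, f i) ^ k =
      ∑ m ∈ finsuppAntidiag s k, (m.multinomial : R) * m.prod fun i e => f i ^ e := by
  rw [sum_pow_eq_sum_piAntidiag]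
  symm
  refine sum_nbij (⇑) (fun m hm => ?_) (fun _ _ _ _ h => DFunLike.coe_injective h)
    (fun g hg => ?_) fun m hm => ?_
  · obtain ⟨hsum, hsupp⟩ := mem_finsuppAntidiag.1 hm
    exact mem_piAntidiag.2 ⟨hsum, fun i hi => hsupp (Finsupp.mem_support_iff.2 hi)⟩
  · have hsupp := (mem_piAntidiag.1 hg).2
    exact ⟨Finsupp.onFinset s g hsupp, mem_finsuppAntidiag.2 ⟨(mem_piAntidiag.1 hg).1,
      Finsupp.support_onFinset_subset⟩, rfl⟩
  · have hsupp := (mem_finsuppAntidiag.1 hm).2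
    rw [Finsupp.multinomial_eq_of_support_subset hsupp,
      Finsupp.prod_of_support_subset m hsupp _ fun i _ => pow_zero (f i)]

theorem Finset.pairwiseDisjoint_finsuppAntidiag {ι μ : Type*} [DecidableEq ι]
    [AddCommMonoid μ] [HasAntidiagonal μ] [DecidableEq μ] (s : Finset ι) :
    (Set.univ : Set μ).PairwiseDisjoint (finsuppAntidiag s) := by
  intro k _ l _ hkl
  refine disjoint_left.2 fun m hk hl => hkl ?_
  rw [← (mem_finsuppAntidiag.1 hk).1, (mem_finsuppAntidiag.1 hl).1]

namespace PowerSeries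

variable {R : Type*} [CommRing R]

theorem coeff_pow_eq_coeff_trunc_pow (φ : R⟦X⟧) (n k : ℕ) :
    coeff n (φ ^ k) = coeff n ((trunc (n + 1) φ : R⟦X⟧) ^ k) := by
  rw [← coeff_coe_trunc_of_lt (lt_add_one n), ← trunc_trunc_pow,
    coeff_coe_trunc_of_lt (lt_add_one n)]

theorem coe_trunc_succ_eq_sum_Icc {φ : R⟦X⟧} (hφ : constantCoeff φ = 0) (n : ℕ) :
    (trunc (n + 1) φ : R⟦X⟧) = ∑ j ∈ Icc 1 n, C (coeff j φ) * X ^ j := by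
  ext d
  simp only [Polynomial.coeff_coe, coeff_trunc, map_sum, coeff_C_mul_X_pow, sum_ite_eq, mem_Icc]
  rcases Nat.eq_zero_or_pos d with rfl | hd
  · simp [hφ]
  · simp only [Nat.lt_succ_iff, Nat.one_le_iff_ne_zero.2 hd.ne', true_and]

theorem coeff_sum_C_mul_X_pow_pow (s : Finset ℕ) (x : ℕ → R) (n k : ℕ) :
    coeff n ((∑ j ∈ s, C (x j) * X ^ j) ^ k) =
      ∑ m ∈ finsuppAntidiag s k with (m.sum fun j e => j * e) = n,
        (m.multinomial : R) * m.prod fun j e => x j ^ e := by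
  rw [sum_pow_eq_sum_finsuppAntidiag, map_sum, sum_filter]
  refine sum_congr rfl fun m _ => ?_
  have hprod : (m.prod fun j e => (C (x j) * X ^ j) ^ e) =
      C (m.prod fun j e => x j ^ e) * X ^ (m.sum fun j e => j * e) := by
    simp only [Finsupp.prod, Finsupp.sum, mul_pow, prod_mul_distrib, map_prod, map_pow, ← pow_mul,
      prod_pow_eq_pow_sum]
  rw [hprod, ← mul_assoc, ← map_natCast C, ← map_mul, coeff_C_mul_X_pow]
  simp only [eq_comm]

theorem coeff_pow_eq_sum_finsuppAntidiag {φ : R⟦X⟧} (hφ : constantCoeff φ = 0) (n k : ℕ) :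
    coeff n (φ ^ k) =
      ∑ m ∈ finsuppAntidiag (Icc 1 n) k with (m.sum fun j e => j * e) = n,
        (m.multinomial : R) * m.prod fun j e => coeff j φ ^ e := by
  rw [coeff_pow_eq_coeff_trunc_pow, coe_trunc_succ_eq_sum_Icc hφ, coeff_sum_C_mul_X_pow_pow]

end PowerSeries

namespace Finsupp

theorem sum_le_sum_mul_of_apply_zero {m : ℕ →₀ ℕ} (hm : m 0 = 0) :
    (m.sum fun _ e => e) ≤ m.sum fun j e => j * e := by
  refine sum_le_sum fun j hj => Nat.le_mul_of_pos_left _ (Nat.pos_of_ne_zero ?_)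
  rintro rfl
  exact mem_support_iff.1 hj hm

theorem support_subset_Icc_iff {m : ℕ →₀ ℕ} {n : ℕ} (hn : (m.sum fun j e => j * e) = n) :
    m.support ⊆ Icc 1 n ↔ m 0 = 0 := by
  refine ⟨fun h => notMem_support_iff.1 fun h0 => by simpa using h h0, fun hm j hj => ?_⟩
  have hj0 : j ≠ 0 := by
    rintro rfl
    exact mem_support_iff.1 hj hm
  refine mem_Icc.2 ⟨Nat.one_le_iff_ne_zero.2 hj0, ?_⟩
  calc j ≤ j * m j := Nat.le_mul_of_pos_right j (Nat.pos_of_ne_zero (mem_support_iff.1 hj))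
    _ ≤ m.sum fun j e => j * e :=
      Finset.single_le_sum (f := fun j => j * m j) (fun _ _ => Nat.zero_le _) hj
    _ = n := hn

theorem mem_biUnion_finsuppAntidiag_Icc_iff {m : ℕ →₀ ℕ} {n : ℕ} :
    m ∈ (range (n + 1)).biUnion
        (fun k => {m ∈ finsuppAntidiag (Icc 1 n) k | (m.sum fun j e => j * e) = n}) ↔
      m 0 = 0 ∧ (m.sum fun j e => j * e) = n := by
  simp only [mem_biUnion, mem_range, mem_filter, mem_finsuppAntidiag']
  constructor
  · rintro ⟨k, -, ⟨-, hsupp⟩, hn⟩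
    exact ⟨(support_subset_Icc_iff hn).1 hsupp, hn⟩
  · rintro ⟨hm, hn⟩
    exact ⟨_, Nat.lt_succ_of_le (hn ▸ sum_le_sum_mul_of_apply_zero hm),
      ⟨rfl, (support_subset_Icc_iff hn).2 hm⟩, hn⟩

end Finsupp

/-- Sequences `m = (m₁, m₂, …)` are encoded as `m : ℕ →₀ ℕ` with `m 0 = 0`. -/
theorem coeff_comp_multinomial {R : Type*} [CommRing R] (A c : ℕ → R) (n : ℕ) :
    PowerSeries.coeff n
        (compPS (PowerSeries.mk A) (PowerSeries.mk fun j => if j = 0 then 0 else c j)) =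
      ∑ᶠ (m : ℕ →₀ ℕ) (_ : m 0 = 0 ∧ (m.sum fun j e => j * e) = n),
        m.multinomial • (A (m.sum fun _ e => e) * ∏ j ∈ m.support, c j ^ m j) := by
  set θ : R⟦X⟧ := PowerSeries.mk fun j => if j = 0 then 0 else c j
  have hθ : constantCoeff θ = 0 := by simp [θ, ← coeff_zero_eq_constantCoeff_apply]
  rw [finsum_cond_eq_sum_of_cond_iff _ fun _ => Finsupp.mem_biUnion_finsuppAntidiag_Icc_iff.symm,
    sum_biUnion ((pairwiseDisjoint_finsuppAntidiag _).subset (Set.subset_univ _) |>.mono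
      fun _ => filter_subset _ _)]
  simp only [compPS, coeff_mk]
  refine sum_congr rfl fun k _ => ?_
  rw [coeff_pow_eq_sum_finsuppAntidiag hθ, mul_sum]
  refine sum_congr rfl fun m hm => ?_
  obtain ⟨⟨hk, hsupp⟩, -⟩ := mem_filter.1 hm |>.imp_left mem_finsuppAntidiag'.1
  have hprod : (m.prod fun j e => coeff j θ ^ e) = ∏ j ∈ m.support, c j ^ m j :=
    prod_congr rfl fun j hj => by
      simp only [θ, coeff_mk, if_neg (Nat.one_le_iff_ne_zero.1 (mem_Icc.1 (hsupp hj)).1)]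
  rw [hk, hprod, nsmul_eq_mul]
  ring
end

section
/- Let f(z) = z + c_1 z² + c_2 z³ + … be a formal power series over ℂ and p ∈ ℂ. Define z^{p+1} f''(z)/f(z)^p := z·f''(z) · exp(−p·log(f(z)/z)), which is well defined since f(z)/z has constant term 1. Then for every n ≥ 0, its coefficient of z^n equals ∑_{m: ‖m‖ = n} 𝔟_m(p) · c^m / ∏_j m_j!, where for |m| ≥ 1, 𝔟_m(p) = (−1)^{|m|+1} · (∏_{i=0}^{|m|−2}(p+i)) · (M_1 + M_2) (the product p(p+1)⋯(p+|m|−2) = (p+|m|−2)!/(p−1)! having |m|−1 factors, equal to 1 when |m| = 1), and the term for m = 0 is zero. -/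
open PowerSeries Finset

noncomputable def expPS {R : Type*} [CommRing R] [Algebra ℚ R] (u : PowerSeries R) :
    PowerSeries R :=
  PowerSeries.mk fun n => ∑ k ∈ Finset.range (n + 1),
    ((k.factorial : ℚ)⁻¹ : ℚ) • PowerSeries.coeff n (u ^ k)

/-- Formal logarithm `log(1 + u)` (for `u` with zero constant term). -/
noncomputable def logOneAddPS {R : Type*} [CommRing R] [Algebra ℚ R] (u : PowerSeries R) :
    PowerSeries R :=
  PowerSeries.mk fun n => ∑ k ∈ Finset.range (n + 1),
    (((-1 : ℚ) ^ (k + 1) / k) : ℚ) • PowerSeries.coeff n (u ^ k)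

/-- Complex power `(1 + u)^p := exp(p·log(1+u))` for `u` with zero constant term. -/
noncomputable def onePlusPow (u : PowerSeries ℂ) (p : ℂ) : PowerSeries ℂ :=
  expPS (PowerSeries.C p * logOneAddPS u)

/-- The formal power series `f(z) = z + c₁z² + c₂z³ + ⋯`. -/
noncomputable def fSeries (c : ℕ → ℂ) : PowerSeries ℂ :=
  PowerSeries.mk fun n => if n = 0 then 0 else if n = 1 then 1 else c (n - 1)

/-- The series `z^{p+1} f''(z)/f(z)^p := z·f''(z) · exp(−p·log(f(z)/z))`,
well defined since `f(z)/z = 1 + c₁z + ⋯` has constant term `1`. -/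
noncomputable def GSeries (c : ℕ → ℂ) (p : ℂ) : PowerSeries ℂ :=
  PowerSeries.X * (fSeries c).derivativeFun.derivativeFun *
    onePlusPow (PowerSeries.mk fun j => if j = 0 then 0 else c j) (-p)

/-! The power `(1 + u)^(-p) = exp(-p log(1 + u))` is the binomial series `∑ₖ C(-p, k) uᵏ`
substituted at `u = f(z)/z - 1`: as series in `X`, both `exp(r log(1 + X))` and
`∑ₖ C(r, k) Xᵏ` solve `(1 + X) y' = r y` with `y(0) = 1`, which fixes every coefficient.
Expanding `uᵏ` by the multinomial theorem indexes the coefficient of `zᴺ` by the multiplicity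
vectors `m` of the partitions of `N`. Multiplying by `z f''(z) = ∑ⱼ (j + j²) cⱼ zʲ` adds one
part `j` to such a vector; summing over the part removed from `m` and using
`mⱼ · (m - eⱼ)! = m!` produces the factor `∑ⱼ (j + j²) mⱼ = M₁ + M₂`. -/

open scoped Nat

namespace Ring

variable {R : Type*} [CommRing R] [BinomialRing R]

theorem choose_succ_mul (r : R) (n : ℕ) : choose r (n + 1) * (n + 1) = choose r n * (r - n) := by
  have h := choose_smul_choose r (n.le_add_right 1)
  rw [Nat.choose_succ_self_right, Nat.add_sub_cancel_left, choose_one_right, nsmul_eq_mul] at h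
  push_cast at h
  linear_combination h

theorem choose_mul_factorial (r : R) (k : ℕ) : choose r k * k ! = ∏ i ∈ range k, (r - i) := by
  induction k with
  | zero => simp
  | succ k ih =>
    rw [Nat.factorial_succ, prod_range_succ, ← ih]
    push_cast
    linear_combination (k ! : R) * choose_succ_mul r k

theorem choose_neg_mul_factorial (r : R) (k : ℕ) :
    choose (-r) k * k ! = (-1) ^ k * ∏ i ∈ range k, (r + i) := by
  have h := prod_neg (s := range k) fun i => r + i
  rw [card_range] at h
  rw [choose_mul_factorial, ← h]
  exact prod_congr rfl fun i _ => by ring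

end Ring

namespace Finsupp

variable {α : Type*} {m : α →₀ ℕ} {j : α}

theorem prod_factorial_mul_multinomial (m : α →₀ ℕ) :
    m.prod (fun _ e => e !) * m.multinomial = (degree m)! :=
  Nat.multinomial_spec m.support m

theorem degree_tsub_single_add_one (hj : m j ≠ 0) : degree (m - single j 1) + 1 = degree m := by
  conv_rhs => rw [← sub_add_single_one_cancel hj]
  rw [map_add, degree_single]

theorem prod_pow_tsub_single_mul {M : Type*} [CommMonoid M] (g : α → M) (hj : m j ≠ 0) :
    (m - single j 1).prod (fun i e => g i ^ e) * g j = m.prod fun i e => g i ^ e := by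
  conv_rhs => rw [← sub_add_single_one_cancel hj]
  rw [prod_add_index' (fun _ => pow_zero _) (fun _ _ _ => pow_add _ _ _)]
  simp

theorem prod_factorial_tsub_single_mul (hj : m j ≠ 0) :
    (m - single j 1).prod (fun _ e => e !) * m j = m.prod fun _ e => e ! := by
  classical
  have hsub : (m - single j 1).support ⊆ m.support := fun i hi => by
    simp only [mem_support_iff, coe_tsub, Pi.sub_apply] at hi ⊢
    omega
  have hj' : j ∈ m.support := mem_support_iff.mpr hj
  rw [prod_of_support_subset _ hsub _ (fun _ _ => Nat.factorial_zero), Finsupp.prod,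
    ← Finset.mul_prod_erase _ _ hj', ← Finset.mul_prod_erase _ _ hj', mul_right_comm]
  congr 1
  · simp only [coe_tsub, Pi.sub_apply, single_eq_same]
    rw [mul_comm, Nat.mul_factorial_pred hj]
  · refine Finset.prod_congr rfl fun i hi => ?_
    simp [single_eq_of_ne (ne_of_mem_erase hi)]

theorem multinomial_tsub_single_mul_prod_factorial (hj : m j ≠ 0) :
    (m - single j 1).multinomial * m.prod (fun _ e => e !) = (degree m - 1)! * m j := by
  rw [← prod_factorial_tsub_single_mul hj, ← degree_tsub_single_add_one hj, Nat.add_sub_cancel,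
    ← prod_factorial_mul_multinomial]
  ring

theorem sum_multinomial_tsub_single (hm : m ≠ 0) :
    ∑ i ∈ m.support, (m - single i 1).multinomial = m.multinomial := by
  have hfac : 0 < m.prod fun _ e => e ! := prod_pos fun i _ => Nat.factorial_pos _
  refine Nat.eq_of_mul_eq_mul_right hfac ?_
  have hdeg : degree m ≠ 0 := by rwa [ne_eq, degree_eq_zero_iff]
  rw [Finset.sum_mul, Finset.sum_congr rfl fun i hi =>
    multinomial_tsub_single_mul_prod_factorial (mem_support_iff.mp hi), ← Finset.mul_sum,
    ← degree_apply, mul_comm m.multinomial, prod_factorial_mul_multinomial, mul_comm,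
    Nat.mul_factorial_pred hdeg]

theorem sum_support_mul_choose_mul_multinomial_tsub_single {K : Type*} [Field K]
    [CharZero K] (r : K) (c : ℕ → K) (m : ℕ →₀ ℕ) :
    ∑ j ∈ m.support, ((j : K) + j ^ 2) * c j *
        (Ring.choose r (degree (m - single j 1)) * (m - single j 1).multinomial *
          (m - single j 1).prod fun i e => c i ^ e)
      = Ring.choose r (degree m - 1) * (degree m - 1)! *
          (((m.sum fun j e => j * e : ℕ) : K) + ((m.sum fun j e => j ^ 2 * e : ℕ) : K)) *
          (m.prod fun j e => c j ^ e) / m.prod fun _ e => (e ! : K) := by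
  have hfac : (m.prod fun _ e => (e ! : K)) ≠ 0 :=
    prod_ne_zero_iff.mpr fun i _ => Nat.cast_ne_zero.mpr (Nat.factorial_ne_zero _)
  have hM : ((m.sum fun j e => j * e : ℕ) : K) + ((m.sum fun j e => j ^ 2 * e : ℕ) : K)
      = ∑ j ∈ m.support, ((j : K) + j ^ 2) * m j := by
    simp only [Finsupp.sum, Nat.cast_sum, Nat.cast_mul, Nat.cast_pow, ← sum_add_distrib, add_mul]
  rw [eq_div_iff hfac, hM, Finset.mul_sum, Finset.sum_mul, Finset.sum_mul]
  refine Finset.sum_congr rfl fun j hj => ?_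
  have hj : m j ≠ 0 := mem_support_iff.mp hj
  have hdeg : degree (m - single j 1) = degree m - 1 := by
    have := degree_tsub_single_add_one hj
    omega
  have hmult : ((m - single j 1).multinomial : K) * (m.prod fun _ e => (e ! : K))
      = (degree m - 1)! * m j := by
    exact_mod_cast multinomial_tsub_single_mul_prod_factorial hj
  rw [hdeg, ← prod_pow_tsub_single_mul c hj]
  linear_combination (Ring.choose r (degree m - 1) * ((j : K) + j ^ 2) * c j *
    (m - single j 1).prod fun i e => c i ^ e) * hmult

end Finsupp

open Finsupp

/-- The multiplicity vectors of the partitions of `n`: `m j` is the number of parts equal to `j`. -/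
noncomputable def partitionVectors (n : ℕ) : Finset (ℕ →₀ ℕ) :=
  {m ∈ (range (n + 1)).finsupp fun _ => range (n + 1) | m 0 = 0 ∧ weight id m = n}

theorem mem_partitionVectors {n : ℕ} {m : ℕ →₀ ℕ} :
    m ∈ partitionVectors n ↔ m 0 = 0 ∧ weight id m = n := by
  refine ⟨fun h => (mem_filter.mp h).2, fun h => mem_filter.mpr ⟨?_, h⟩⟩
  refine mem_finsupp_iff.mpr ⟨fun i hi => ?_, fun i _ => ?_⟩
  · simpa [Nat.lt_succ_iff, ← h.2] using le_weight_of_ne_zero' id (mem_support_iff.mp hi)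
  · rcases eq_or_ne i 0 with rfl | hi
    · simp [h.1]
    · simpa [Nat.lt_succ_iff, ← h.2] using le_weight id hi m

theorem degree_le_of_mem_partitionVectors {n : ℕ} {m : ℕ →₀ ℕ}
    (hm : m ∈ partitionVectors n) : degree m ≤ n := by
  obtain ⟨h0, hw⟩ := mem_partitionVectors.mp hm
  rw [← hw, degree_eq_weight_one, weight_apply, weight_apply]
  refine Finset.sum_le_sum fun i hi => ?_
  have : i ≠ 0 := by rintro rfl; exact mem_support_iff.mp hi h0
  simpa using Nat.le_mul_of_pos_right (m i) (Nat.pos_of_ne_zero this)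

theorem sum_range_mul_sum_partitionVectors {R : Type*} [CommSemiring R] {a : ℕ → R}
    (ha : a 0 = 0) (G : (ℕ →₀ ℕ) → R) (n : ℕ) :
    ∑ j ∈ range (n + 1), a j * ∑ m ∈ partitionVectors (n - j), G m
      = ∑ m ∈ partitionVectors n, ∑ j ∈ m.support, a j * G (m - single j 1) := by
  simp_rw [Finset.mul_sum]
  rw [sum_sigma', sum_sigma']
  refine sum_bij_ne_zero (fun x _ _ => ⟨x.2 + single x.1 1, x.1⟩) ?_ ?_ ?_ ?_
  · rintro ⟨j, m⟩ hx hne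
    have hj : j ≠ 0 := by rintro rfl; simp [ha] at hne
    simp only [mem_sigma, mem_range, mem_partitionVectors] at hx ⊢
    refine ⟨⟨by simp [hx.2.1, single_eq_of_ne (Ne.symm hj)], ?_⟩, by simp⟩
    rw [map_add, hx.2.2, weight_single]
    simp only [smul_eq_mul, one_mul, id]
    omega
  · rintro ⟨j, m⟩ _ _ ⟨j', m'⟩ _ _ h
    obtain ⟨h, rfl⟩ := Sigma.mk.inj_iff.mp h
    rw [add_right_cancel (a := m) h]
  · rintro ⟨m, j⟩ hx hne
    simp only [mem_sigma, mem_partitionVectors, mem_support_iff] at hx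
    obtain ⟨⟨h0, hw⟩, hj⟩ := hx
    have hw' := weight_sub_single_add (w := id) hj
    refine ⟨⟨j, m - single j 1⟩, ?_, by simpa using hne,
      by simp [sub_add_single_one_cancel hj]⟩
    simp only [mem_sigma, mem_range, mem_partitionVectors, coe_tsub, Pi.sub_apply, h0, id]
      at hw' ⊢
    omega
  · rintro ⟨j, m⟩ _ _
    simp

namespace PowerSeries

theorem coeff_pow_eq_sum_partitionVectors {R : Type*} [CommSemiring R] {f : R⟦X⟧}
    (hf : constantCoeff f = 0) (k n : ℕ) :
    coeff n (f ^ k) = ∑ m ∈ partitionVectors n with degree m = k,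
      (m.multinomial : R) * m.prod fun j e => coeff j f ^ e := by
  induction k generalizing n with
  | zero =>
    simp only [pow_zero, coeff_one, degree_eq_zero_iff, sum_filter, Finset.sum_ite_eq']
    simp [mem_partitionVectors, eq_comm, Finsupp.multinomial]
  | succ k ih =>
    rw [pow_succ', coeff_mul, Nat.sum_antidiagonal_eq_sum_range_succ_mk]
    simp_rw [ih, sum_filter]
    rw [sum_range_mul_sum_partitionVectors (a := fun j => coeff j f) (by simpa using hf)]
    refine sum_congr rfl fun m _ => ?_
    rcases eq_or_ne m 0 with rfl | hm
    · simp
    have hdeg (j : ℕ) (hj : j ∈ m.support) :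
        degree (m - single j 1) = k ↔ degree m = k + 1 := by
      rw [← degree_tsub_single_add_one (mem_support_iff.mp hj), add_left_inj]
    split_ifs with hk
    · rw [← sum_multinomial_tsub_single hm, Nat.cast_sum, Finset.sum_mul]
      refine sum_congr rfl fun j hj => ?_
      rw [if_pos ((hdeg j hj).mpr hk), ← prod_pow_tsub_single_mul _ (mem_support_iff.mp hj)]
      ring
    · exact sum_eq_zero fun j hj => by rw [if_neg (mt (hdeg j hj).mp hk), mul_zero]

theorem coeff_subst_eq_sum_range {R S : Type*} [CommRing R] [CommRing S] [Algebra R S]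
    {b : S⟦X⟧} (hb : constantCoeff b = 0) (f : R⟦X⟧) (n : ℕ) :
    coeff n (f.subst b) = ∑ k ∈ range (n + 1), coeff k f • coeff n (b ^ k) := by
  rw [coeff_subst' (HasSubst.of_constantCoeff_zero' hb)]
  refine finsum_eq_sum_of_support_subset _ fun k hk => ?_
  rw [Function.mem_support] at hk
  have hX : X ^ k ∣ b ^ k := pow_dvd_pow_of_dvd (X_dvd_iff.mpr hb) k
  by_contra hkn
  exact hk (by rw [X_pow_dvd_iff.mp hX n (by simpa using hkn), smul_zero])

theorem coeff_succ_mul_of_one_add_X_mul_derivative {R : Type*} [CommRing R] {f : R⟦X⟧}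
    {r : R}
    (h : (1 + X) * d⁄dX R f = C r * f) (n : ℕ) :
    coeff (n + 1) f * (n + 1) = (r - n) * coeff n f := by
  have h := congrArg (coeff n) h
  rcases n with _ | n
  · simp only [add_mul, one_mul, map_add, coeff_zero_X_mul, coeff_derivative, coeff_C_mul] at h
    push_cast at h ⊢
    linear_combination h
  · simp only [add_mul, one_mul, map_add, coeff_succ_X_mul, coeff_derivative, coeff_C_mul] at h
    push_cast at h ⊢
    linear_combination h

section

variable {A : Type*} [CommRing A] [Algebra ℚ A]

theorem expPS_eq_exp_subst {v : A⟦X⟧} (hv : constantCoeff v = 0) :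
    expPS v = (exp A).subst v := by
  ext n
  simp [expPS, coeff_subst_eq_sum_range hv, coeff_exp, Algebra.smul_def]

theorem logOneAddPS_eq_log_subst {u : A⟦X⟧} (hu : constantCoeff u = 0) :
    logOneAddPS u = (log A).subst u := by
  ext n
  simp only [logOneAddPS, coeff_mk, coeff_subst_eq_sum_range hu, coeff_log, Algebra.smul_def]
  refine sum_congr rfl fun k _ => ?_
  split_ifs with hk <;> simp [hk]

theorem one_add_X_mul_derivative_log : (1 + X) * d⁄dX A (log A) = 1 := by
  ext n
  rcases n with _ | n
  · simp [deriv_log]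
  · simp [deriv_log, add_mul, coeff_succ_X_mul, pow_succ]

end

section

variable {K : Type*} [Field K] [CharZero K]

theorem one_add_X_mul_derivative_exp_subst (r : K) :
    (1 + X) * d⁄dX K ((exp K).subst (C r * log K)) = C r * (exp K).subst (C r * log K) := by
  have hs : HasSubst (C r * log K) := HasSubst.of_constantCoeff_zero' (by simp)
  rw [derivative_subst hs, derivative_exp, ← smul_eq_C_mul, Derivation.map_smul]
  simp only [smul_eq_C_mul]
  linear_combination (C r * (exp K).subst (C r * log K)) * one_add_X_mul_derivative_log (A := K)

theorem exp_subst_C_mul_log (r : K) : (exp K).subst (C r * log K) = binomialSeries K r := by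
  have hs : constantCoeff (C r * log K) = 0 := by simp
  ext n
  induction n with
  | zero => simp [coeff_subst_eq_sum_range hs]
  | succ n ih =>
    refine mul_right_cancel₀ (n.cast_add_one_ne_zero : (n : K) + 1 ≠ 0) ?_
    rw [coeff_succ_mul_of_one_add_X_mul_derivative (one_add_X_mul_derivative_exp_subst r), ih]
    simp only [binomialSeries_coeff, smul_eq_mul, mul_one]
    rw [Ring.choose_succ_mul, mul_comm]

end

theorem coeff_binomialSeries_subst {A : Type*} [CommRing A] [BinomialRing A] (r : A) {u : A⟦X⟧}
    (hu : constantCoeff u = 0) (n : ℕ) :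
    coeff n ((binomialSeries A r).subst u) = ∑ m ∈ partitionVectors n,
      Ring.choose r (degree m) * m.multinomial * m.prod fun j e => coeff j u ^ e := by
  simp_rw [coeff_subst_eq_sum_range hu, binomialSeries_coeff, coeff_pow_eq_sum_partitionVectors hu,
    smul_eq_mul, mul_one, Finset.mul_sum]
  rw [← sum_fiberwise_of_maps_to (g := degree) fun m hm =>
    mem_range.mpr (Nat.lt_succ_of_le (degree_le_of_mem_partitionVectors hm))]
  refine sum_congr rfl fun k _ => sum_congr rfl fun m hm => ?_
  rw [(mem_filter.mp hm).2, mul_assoc]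

theorem onePlusPow_eq_binomialSeries_subst {u : ℂ⟦X⟧} (hu : constantCoeff u = 0) (r : ℂ) :
    onePlusPow u r = (binomialSeries ℂ r).subst u := by
  have hs : HasSubst u := HasSubst.of_constantCoeff_zero' hu
  have hlog : C r * (log ℂ).subst u = (C r * log ℂ).subst u := by
    rw [subst_mul hs, subst_C]
    rfl
  rw [onePlusPow, logOneAddPS_eq_log_subst hu, hlog,
    expPS_eq_exp_subst (constantCoeff_subst_eq_zero hu _ (by simp)),
    ← subst_comp_subst_apply (HasSubst.of_constantCoeff_zero' (by simp)) hs, exp_subst_C_mul_log]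

end PowerSeries

theorem coeff_X_mul_derivativeFun_derivativeFun_fSeries (c : ℕ → ℂ) (j : ℕ) :
    coeff j (X * (fSeries c).derivativeFun.derivativeFun) = ((j : ℂ) + j ^ 2) * c j := by
  rcases j with _ | j
  · simp
  · change coeff (j + 1) (X * d⁄dX ℂ (d⁄dX ℂ (fSeries c))) = _
    rw [coeff_succ_X_mul, coeff_derivative, coeff_derivative, fSeries, coeff_mk,
      if_neg (by omega), if_neg (by omega), Nat.add_sub_cancel]
    push_cast
    ring

/-- For `f(z) = z + c₁z² + ⋯` and `p ∈ ℂ`, the coefficient of `zⁿ` in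
`z^{p+1} f''(z)/f(z)^p` equals `∑_{m : ‖m‖ = n} 𝔟_m(p) c^m / ∏ⱼ mⱼ!`, where for
`|m| ≥ 1`, `𝔟_m(p) = (−1)^{|m|+1} (∏_{i=0}^{|m|−2}(p+i)) (M₁ + M₂)` (the falling-type
product `p(p+1)⋯(p+|m|−2)` having `|m|−1` factors, `1` when `|m| = 1`), with
`M₁ = ∑ j·mⱼ`, `M₂ = ∑ j²·mⱼ`, and the term for `m = 0` is zero. -/
theorem coeff_z_fsecond_over_f (c : ℕ → ℂ) (p : ℂ) (n : ℕ) :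
    PowerSeries.coeff n (GSeries c p) =
      ∑ᶠ (m : ℕ →₀ ℕ) (_ : m ≠ 0 ∧ m 0 = 0 ∧ (m.sum fun j e => j * e) = n),
        (-1 : ℂ) ^ ((m.sum fun _ e => e) + 1) *
          (∏ i ∈ Finset.range ((m.sum fun _ e => e) - 1), (p + i)) *
          (((m.sum fun j e => j * e : ℕ) : ℂ) + ((m.sum fun j e => j ^ 2 * e : ℕ) : ℂ)) *
          (∏ j ∈ m.support, c j ^ m j) / ∏ j ∈ m.support, ((m j).factorial : ℂ) := by
  rw [GSeries]
  set u : ℂ⟦X⟧ := mk fun j => if j = 0 then 0 else c j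
  have hu : constantCoeff u = 0 := by simp [u]
  have hB (N : ℕ) : coeff N (onePlusPow u (-p)) = ∑ m ∈ partitionVectors N,
      Ring.choose (-p) (degree m) * m.multinomial * m.prod fun j e => c j ^ e := by
    rw [onePlusPow_eq_binomialSeries_subst hu, coeff_binomialSeries_subst _ hu]
    refine Finset.sum_congr rfl fun m hm => congrArg _ (Finsupp.prod_congr fun j hj => ?_)
    have : j ≠ 0 := by rintro rfl; exact mem_support_iff.mp hj (mem_partitionVectors.mp hm).1
    simp [u, coeff_mk, this]
  rw [finsum_cond_eq_sum_of_cond_iff _ (t := partitionVectors n) ?_, coeff_mul,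
    Nat.sum_antidiagonal_eq_sum_range_succ_mk]
  · simp_rw [coeff_X_mul_derivativeFun_derivativeFun_fSeries, hB]
    rw [sum_range_mul_sum_partitionVectors (a := fun j => ((j : ℂ) + j ^ 2) * c j) (by simp)]
    refine Finset.sum_congr rfl fun m _ => ?_
    rw [Finsupp.sum_support_mul_choose_mul_multinomial_tsub_single, Ring.choose_neg_mul_factorial]
    rcases eq_or_ne m 0 with rfl | hm
    · simp
    · have hdeg : degree m ≠ 0 := by rwa [ne_eq, degree_eq_zero_iff]
      rw [show (m.sum fun _ e => e) = degree m from rfl,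
        show degree m + 1 = degree m - 1 + 2 by omega, pow_add, neg_one_sq, mul_one]
      rfl
  · intro m hm
    have hm0 : m ≠ 0 := by rintro rfl; simp at hm
    simp [mem_partitionVectors, hm0, weight_apply, mul_comm]
end

section
/- Let f(z) = z + c_1 z² + c_2 z³ + … be a formal power series over ℂ and define the Schwarzian-type series S_f(z) := 2 f'''(z)/f'(z) − 3 (f''(z)/f'(z))², where 1/f'(z) is the formal inverse of f'(z) (which has constant term 1). Then z² S_f(z) = ∑_{m ≠ 0} 𝔡_m · (∏_j (j+1)^{m_j} / ∏_j m_j!) · c^m · z^{‖m‖}, where the sum is over nonzero finitely supported sequences m of nonnegative integers and 𝔡_m = (−1)^{|m|} (|m|−1)! · (M_2 − 3M_1² + 2M_1). -/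
/-!
Write `u = f' = 1 + ∑_{k ≥ 1} aₖ zᵏ` with `aₖ = (k + 1) cₖ`, and index the monomials `a^m / m!` by
the multiplicity vectors `m` of partitions of `‖m‖`. Removing one part `k` from a partition of `n`
is a bijection onto the pairs (`k`, partition of `n - k`); under it the recursion defining `1/u`
becomes `∑ₖ mₖ (-1)^(|m|-1) (|m|-1)! = -(-1)^|m| |m|!`, so `[zⁿ] 1/u = ∑ (-1)^|m| |m|! a^m/m!`, and
for `G = ∑ pₖ aₖ zᵏ` the same reindexing gives
`[zⁿ] G/u = -∑ (-1)^|m| (|m|-1)! (∑ₖ pₖ mₖ) a^m/m!`.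
With `θ = z d/dz`, the identity `θ(θu/u) = θ²u/u - (θu/u)²` turns
`z² S_f = 2 (θ²u - θu)/u - 3 (θu/u)²` into `3 θ(θu/u) - 2 θu/u - θ²u/u`, which is linear in `1/u`;
the cases `pₖ = k` and `pₖ = k²` produce `M₁ = n` and `M₂`.
-/

open PowerSeries Finset

/-- The Schwarzian-type series `S_f(z) = 2 f'''(z)/f'(z) − 3 (f''(z)/f'(z))²`, where
`1/f'(z)` is the formal inverse of `f'(z)` (whose constant term is `1`). -/
noncomputable def schwarzian (c : ℕ → ℂ) : PowerSeries ℂ :=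
  2 * (fSeries c).derivativeFun.derivativeFun.derivativeFun *
      ((fSeries c).derivativeFun.invOfUnit 1) -
    3 * ((fSeries c).derivativeFun.derivativeFun * ((fSeries c).derivativeFun.invOfUnit 1)) ^ 2

open Finsupp
open scoped Nat

namespace Schwarzian

-- A partition of `n` is encoded by its multiplicities: `m j` is the number of parts equal to `j`.
noncomputable def partitions (n : ℕ) : Finset (ℕ →₀ ℕ) :=
  ((range (n + 1)).finsupp fun _ => range (n + 1)).filter fun m => m 0 = 0 ∧ weight id m = n

variable {m : ℕ →₀ ℕ} {n k : ℕ}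

lemma mem_partitions : m ∈ partitions n ↔ m 0 = 0 ∧ weight id m = n := by
  refine ⟨fun h => (mem_filter.1 h).2, fun ⟨h0, hw⟩ =>
    mem_filter.2 ⟨mem_finsupp_iff.2 ⟨?_, ?_⟩, h0, hw⟩⟩
  · intro j hj
    have : j ≤ weight id m := le_weight_of_ne_zero' id (mem_support_iff.1 hj)
    simp only [mem_range]; omega
  · intro i _
    rcases eq_or_ne i 0 with rfl | hi
    · simp [h0]
    · have := le_weight id hi m
      simp only [mem_range]; omega

lemma ne_zero_of_mem_support (hm : m ∈ partitions n) (hk : k ∈ m.support) : k ≠ 0 := by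
  rintro rfl
  exact mem_support_iff.1 hk (mem_partitions.1 hm).1

lemma partitions_zero : partitions 0 = {0} := by
  ext m
  rw [mem_partitions, mem_singleton]
  refine ⟨fun ⟨h0, hw⟩ => ?_, fun h => by simp [h]⟩
  ext j
  by_contra hj
  have hj0 : j ≠ 0 := by rintro rfl; exact hj h0
  exact hj (by simpa [hw] using le_weight id hj0 m)

lemma ne_zero_of_mem_partitions (hn : n ≠ 0) (hm : m ∈ partitions n) : m ≠ 0 := by
  rintro rfl
  exact hn (by simpa [mem_partitions, eq_comm] using hm)

lemma add_single_mem_partitions (hm : m ∈ partitions (n - k)) (hk : k ∈ Icc 1 n) :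
    m + single k 1 ∈ partitions n := by
  obtain ⟨h0, hw⟩ := mem_partitions.1 hm
  obtain ⟨hk1, hkn⟩ := mem_Icc.1 hk
  refine mem_partitions.2 ⟨by simp [h0, single_apply]; omega, ?_⟩
  rw [map_add, weight_single, hw, smul_eq_mul, one_mul, id]
  omega

lemma sub_single_mem_partitions (hm : m ∈ partitions n) (hk : k ∈ m.support) :
    m - single k 1 ∈ partitions (n - k) := by
  obtain ⟨h0, hw⟩ := mem_partitions.1 hm
  have := weight_sub_single_add (w := id) (mem_support_iff.1 hk)
  refine mem_partitions.2 ⟨by simp [h0], ?_⟩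
  rw [id, hw] at this
  omega

lemma mem_Icc_of_mem_support (hm : m ∈ partitions n) (hk : k ∈ m.support) : k ∈ Icc 1 n := by
  have := le_weight_of_ne_zero' id (mem_support_iff.1 hk)
  rw [(mem_partitions.1 hm).2] at this
  exact mem_Icc.2 ⟨Nat.one_le_iff_ne_zero.2 (ne_zero_of_mem_support hm hk), this⟩

lemma degree_sub_single_add {σ : Type*} {m : σ →₀ ℕ} {k : σ} (hk : k ∈ m.support) :
    degree (m - single k 1) + 1 = degree m := by
  rw [degree_eq_weight_one]
  exact weight_sub_single_add (mem_support_iff.1 hk)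

section Weights

variable {R : Type*} [CommRing R]

/- `invCoeff m` and `-logCoeff m` are the coefficients of `a^m / m!` in `1 / (1 + ∑ aₖ zᵏ)` and in
`log (1 + ∑ aₖ zᵏ)`. -/
noncomputable def invCoeff (m : ℕ →₀ ℕ) : R := (-1) ^ degree m * (degree m)!

noncomputable def logCoeff (m : ℕ →₀ ℕ) : R := (-1) ^ degree m * (degree m - 1)!

lemma invCoeff_sub_single (hk : k ∈ m.support) :
    invCoeff (m - single k 1) = -(logCoeff m : R) := by
  rw [invCoeff, logCoeff, ← degree_sub_single_add hk, pow_succ, Nat.add_sub_cancel]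
  ring

lemma logCoeff_mul_degree (hm : m ≠ 0) : logCoeff m * ((degree m : ℕ) : R) = invCoeff m := by
  have hd : degree m ≠ 0 := (degree_eq_zero_iff m).not.2 hm
  rw [logCoeff, invCoeff, ← Nat.mul_factorial_pred hd]
  push_cast
  ring

lemma sum_mul_invCoeff_sub_single (q : ℕ → R) (m : ℕ →₀ ℕ) :
    ∑ k ∈ m.support, q k * m k * invCoeff (m - single k 1) =
      -(logCoeff m * ∑ k ∈ m.support, q k * m k) := by
  rw [Finset.mul_sum, ← sum_neg_distrib]
  refine sum_congr rfl fun k hk => ?_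
  rw [invCoeff_sub_single hk]
  ring

end Weights

section ExpMonomial

variable {K : Type*} [Field K] [CharZero K]

noncomputable def expMonomial (a : ℕ → K) (m : ℕ →₀ ℕ) : K :=
  (m.prod fun j e => a j ^ e) / m.prod fun _ e => (e ! : K)

lemma expMonomial_add_single (a : ℕ → K) (m : ℕ →₀ ℕ) (k : ℕ) :
    ((m k : K) + 1) * expMonomial a (m + single k 1) = a k * expMonomial a m := by
  have hnum : ((m + single k 1).prod fun j e => a j ^ e) = (m.prod fun j e => a j ^ e) * a k := by
    rw [prod_add_index' (fun _ => pow_zero _) (fun _ _ _ => pow_add _ _ _)]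
    simp [prod_single_index]
  have hden (m : ℕ →₀ ℕ) :
      (m.prod fun _ e => (e ! : K)) = ((m k)! : K) * (m.erase k).prod fun _ e => (e ! : K) :=
    (mul_prod_erase' m k (fun _ e => (e ! : K)) fun _ => by simp).symm
  have herase : (m + single k 1).erase k = m.erase k := by simp [erase_add]
  have hfac : ((m k + 1)! : K) = ((m k : K) + 1) * (m k)! := by
    push_cast [Nat.factorial_succ]; ring
  have hrest : ((m.erase k).prod fun _ e => (e ! : K)) ≠ 0 :=
    Finsupp.prod_ne_zero_iff.2 fun _ _ => Nat.cast_ne_zero.2 (Nat.factorial_ne_zero _)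
  rw [expMonomial, expMonomial, hnum, hden, hden m, herase, Finsupp.add_apply, single_eq_same, hfac]
  field_simp

noncomputable def partitionSum (a : ℕ → K) (W : (ℕ →₀ ℕ) → K) (n : ℕ) : K :=
  ∑ m ∈ partitions n, W m * expMonomial a m

lemma partitionSum_zero (a : ℕ → K) (W : (ℕ →₀ ℕ) → K) : partitionSum a W 0 = W 0 := by
  simp [partitionSum, partitions_zero, expMonomial]

lemma sum_Icc_mul_partitionSum (a q : ℕ → K) (W : (ℕ →₀ ℕ) → K) (n : ℕ) :
    ∑ k ∈ Icc 1 n, q k * a k * partitionSum a W (n - k) =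
      partitionSum a (fun m => ∑ k ∈ m.support, q k * m k * W (m - single k 1)) n := by
  simp only [partitionSum, Finset.mul_sum, Finset.sum_mul]
  rw [sum_sigma', sum_sigma']
  refine sum_bij' (fun p _ => ⟨p.2 + single p.1 1, p.1⟩) (fun p _ => ⟨p.2, p.1 - single p.2 1⟩)
    ?_ ?_ ?_ ?_ ?_
  · rintro ⟨k, m⟩ hp
    obtain ⟨hk, hm⟩ := mem_sigma.1 hp
    exact mem_sigma.2 ⟨add_single_mem_partitions hm hk, by simp⟩
  · rintro ⟨m, k⟩ hp
    obtain ⟨hm, hk⟩ := mem_sigma.1 hp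
    exact mem_sigma.2 ⟨mem_Icc_of_mem_support hm hk, sub_single_mem_partitions hm hk⟩
  · rintro ⟨k, m⟩ _
    simp
  · rintro ⟨m, k⟩ hp
    simp [sub_add_single_one_cancel (mem_support_iff.1 (mem_sigma.1 hp).2)]
  · rintro ⟨k, m⟩ _
    have := expMonomial_add_single a m k
    simp only [Finsupp.add_apply, single_eq_same, Nat.cast_add, Nat.cast_one,
      add_tsub_cancel_right]
    linear_combination -(q k * W m) * this

lemma coeff_mul_mk_partitionSum (a p : ℕ → K) (G : K⟦X⟧) (hG : ∀ k ≠ 0, coeff k G = p k * a k)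
    (n : ℕ) :
    coeff n (G * mk (partitionSum a invCoeff)) = coeff 0 G * partitionSum a invCoeff n -
      partitionSum a (fun m => logCoeff m * ∑ k ∈ m.support, p k * m k) n := by
  rw [coeff_mul, Nat.sum_antidiagonal_eq_sum_range_succ_mk, Nat.range_succ_eq_Icc_zero,
    ← insert_Icc_add_one_left_eq_Icc n.zero_le, sum_insert (by simp)]
  simp only [coeff_mk, Nat.sub_zero, zero_add]
  rw [sum_congr rfl fun k hk => by rw [hG k (Nat.one_le_iff_ne_zero.1 (mem_Icc.1 hk).1)],
    sum_Icc_mul_partitionSum]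
  simp only [partitionSum, sum_mul_invCoeff_sub_single, neg_mul, sum_neg_distrib]
  ring

lemma mk_partitionSum_invCoeff_eq_invOfUnit (u : K⟦X⟧) (hu : constantCoeff u = 1) :
    mk (partitionSum (coeff · u) invCoeff) = invOfUnit u 1 := by
  have hinv : u * invOfUnit u 1 = 1 := mul_invOfUnit u 1 (by simp [hu])
  suffices h : u * mk (partitionSum (coeff · u) invCoeff) = 1 by
    linear_combination (invOfUnit u 1) * h - mk (partitionSum (coeff · u) invCoeff) * hinv
  ext n
  rw [coeff_mul_mk_partitionSum _ 1 u (fun _ _ => (one_mul _).symm), coeff_one,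
    coeff_zero_eq_constantCoeff_apply, hu, one_mul]
  rcases eq_or_ne n 0 with rfl | hn
  · simp [partitionSum_zero, invCoeff]
  · rw [if_neg hn, sub_eq_zero]
    refine sum_congr rfl fun m hm => ?_
    simp only [Pi.one_apply, one_mul, ← Nat.cast_sum]
    rw [← degree_apply, logCoeff_mul_degree (ne_zero_of_mem_partitions hn hm)]

lemma coeff_mul_invOfUnit (u G : K⟦X⟧) (hu : constantCoeff u = 1) (p : ℕ → K)
    (hG0 : constantCoeff G = 0) (hG : ∀ k ≠ 0, coeff k G = p k * coeff k u) (n : ℕ) :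
    coeff n (G * invOfUnit u 1) =
      -partitionSum (coeff · u) (fun m => logCoeff m * ∑ k ∈ m.support, p k * m k) n := by
  rw [← mk_partitionSum_invCoeff_eq_invOfUnit u hu, coeff_mul_mk_partitionSum _ p G hG,
    coeff_zero_eq_constantCoeff_apply, hG0]
  ring

end ExpMonomial

section Derivative

variable {R : Type*} [CommRing R]

lemma coeff_X_mul_derivative (f : R⟦X⟧) (n : ℕ) : coeff n (X * d⁄dX R f) = n * coeff n f := by
  rcases n with _ | n
  · simp
  · rw [coeff_succ_X_mul, coeff_derivative]
    push_cast
    ring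

lemma derivative_eq_neg_of_mul_eq_one {u v : R⟦X⟧} (huv : u * v = 1) :
    d⁄dX R v = -(d⁄dX R u * v ^ 2) := by
  have h := congrArg (d⁄dX R) huv
  rw [Derivation.leibniz, Derivation.map_one_eq_zero, smul_eq_mul, smul_eq_mul] at h
  linear_combination v * h - d⁄dX R v * huv

lemma coeff_X_sq_mul_schwarzianForm {u v : R⟦X⟧} (huv : u * v = 1) (n : ℕ) :
    coeff n (X ^ 2 * (2 * d⁄dX R (d⁄dX R u) * v - 3 * (d⁄dX R u * v) ^ 2)) =
      (3 * (n : R) - 2) * coeff n (X * d⁄dX R u * v) -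
        coeff n (X * d⁄dX R (X * d⁄dX R u) * v) := by
  have hθ : X ^ 2 * (2 * d⁄dX R (d⁄dX R u) * v - 3 * (d⁄dX R u * v) ^ 2) =
      C 3 * (X * d⁄dX R (X * d⁄dX R u * v)) - C 2 * (X * d⁄dX R u * v) -
        X * d⁄dX R (X * d⁄dX R u) * v := by
    simp only [Derivation.leibniz, derivative_X, smul_eq_mul, derivative_eq_neg_of_mul_eq_one huv,
      map_ofNat]
    ring
  rw [hθ, map_sub, map_sub, coeff_C_mul, coeff_C_mul, coeff_X_mul_derivative]
  ring

end Derivative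

lemma finsum_eq_sum_partitions {M : Type*} [AddCommMonoid M] (F : (ℕ →₀ ℕ) → M) (hF : F 0 = 0)
    (n : ℕ) :
    ∑ᶠ (m : ℕ →₀ ℕ) (_ : m ≠ 0 ∧ m 0 = 0 ∧ (m.sum fun j e => j * e) = n), F m =
      ∑ m ∈ partitions n, F m := by
  refine finsum_cond_eq_sum_of_cond_iff F fun {m} hm => ?_
  have hsum : (m.sum fun j e => j * e) = weight id m := sum_congr rfl fun _ _ => mul_comm _ _
  rw [mem_partitions, hsum, and_iff_right (by rintro rfl; exact hm hF)]

lemma schwarzian_eq (c : ℕ → ℂ) :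
    schwarzian c =
      2 * d⁄dX ℂ (d⁄dX ℂ (d⁄dX ℂ (fSeries c))) * invOfUnit (d⁄dX ℂ (fSeries c)) 1 -
      3 * (d⁄dX ℂ (d⁄dX ℂ (fSeries c)) * invOfUnit (d⁄dX ℂ (fSeries c)) 1) ^ 2 :=
  rfl

lemma constantCoeff_derivative_fSeries (c : ℕ → ℂ) :
    constantCoeff (d⁄dX ℂ (fSeries c)) = 1 := by
  simp [← coeff_zero_eq_constantCoeff_apply, coeff_derivative, fSeries]

lemma coeff_derivative_fSeries (c : ℕ → ℂ) {k : ℕ} (hk : k ≠ 0) :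
    coeff k (d⁄dX ℂ (fSeries c)) = (k + 1) * c k := by
  simp [coeff_derivative, fSeries, hk, mul_comm]

lemma expMonomial_coeff_derivative_fSeries (c : ℕ → ℂ) {m : ℕ →₀ ℕ} (hm : m 0 = 0) :
    expMonomial (coeff · (d⁄dX ℂ (fSeries c))) m =
      ((∏ j ∈ m.support, ((j : ℂ) + 1) ^ m j) / ∏ j ∈ m.support, ((m j)! : ℂ)) *
        ∏ j ∈ m.support, c j ^ m j := by
  have hnum : ∏ j ∈ m.support, coeff j (d⁄dX ℂ (fSeries c)) ^ m j =
      (∏ j ∈ m.support, ((j : ℂ) + 1) ^ m j) * ∏ j ∈ m.support, c j ^ m j := by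
    rw [← prod_mul_distrib]
    refine prod_congr rfl fun j hj => ?_
    have hj0 : j ≠ 0 := by rintro rfl; exact mem_support_iff.1 hj hm
    rw [coeff_derivative_fSeries c hj0, mul_pow]
  rw [expMonomial, Finsupp.prod, Finsupp.prod, hnum]
  ring

lemma coeff_X_sq_mul_schwarzian (c : ℕ → ℂ) (n : ℕ) :
    coeff n (X ^ 2 * schwarzian c) =
      ∑ m ∈ partitions n, logCoeff m *
        (∑ k ∈ m.support, (k : ℂ) ^ 2 * m k - (3 * n - 2) * ∑ k ∈ m.support, (k : ℂ) * m k) *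
          expMonomial (coeff · (d⁄dX ℂ (fSeries c))) m := by
  have hu := constantCoeff_derivative_fSeries c
  rw [schwarzian_eq, coeff_X_sq_mul_schwarzianForm (mul_invOfUnit _ 1 (by simp [hu])),
    coeff_mul_invOfUnit _ _ hu (fun k => k) (by simp) (fun k _ => coeff_X_mul_derivative _ k),
    coeff_mul_invOfUnit _ _ hu (fun k => (k : ℂ) ^ 2) (by simp)
      (fun k _ => by rw [coeff_X_mul_derivative, coeff_X_mul_derivative]; ring)]
  simp only [partitionSum]
  rw [← sum_neg_distrib, ← sum_neg_distrib, Finset.mul_sum, ← sum_sub_distrib]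
  refine sum_congr rfl fun m _ => ?_
  ring

end Schwarzian

open Schwarzian

/-- For `f(z) = z + c₁z² + ⋯`,
`z² S_f(z) = ∑_{m ≠ 0} 𝔡_m (∏ⱼ(j+1)^{mⱼ}/∏ⱼ mⱼ!) c^m z^{‖m‖}` with
`𝔡_m = (−1)^{|m|} (|m|−1)! (M₂ − 3M₁² + 2M₁)`; coefficientwise, for every `n` the
coefficient of `zⁿ` in `z² S_f(z)` equals the sum of
`𝔡_m (∏(j+1)^{mⱼ}/∏ mⱼ!) c^m` over nonzero finitely supported `m` with `‖m‖ = n`. -/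
theorem coeff_schwarzian (c : ℕ → ℂ) (n : ℕ) :
    PowerSeries.coeff n (PowerSeries.X ^ 2 * schwarzian c) =
      ∑ᶠ (m : ℕ →₀ ℕ) (_ : m ≠ 0 ∧ m 0 = 0 ∧ (m.sum fun j e => j * e) = n),
        (-1 : ℂ) ^ (m.sum fun _ e => e) * (((m.sum fun _ e => e) - 1).factorial : ℂ) *
          (((m.sum fun j e => j ^ 2 * e : ℕ) : ℂ) -
            3 * ((m.sum fun j e => j * e : ℕ) : ℂ) ^ 2 +
            2 * ((m.sum fun j e => j * e : ℕ) : ℂ)) *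
          ((∏ j ∈ m.support, ((j : ℂ) + 1) ^ m j) / ∏ j ∈ m.support, ((m j).factorial : ℂ)) *
          ∏ j ∈ m.support, c j ^ m j := by
  rw [finsum_eq_sum_partitions _ (by simp), coeff_X_sq_mul_schwarzian]
  refine sum_congr rfl fun m hm => ?_
  obtain ⟨hm0, hw⟩ := mem_partitions.1 hm
  have hM1 : ∑ k ∈ m.support, (k : ℂ) * m k = n := by
    rw [← hw, weight_apply, Finsupp.sum]
    push_cast [smul_eq_mul, id]
    exact sum_congr rfl fun _ _ => mul_comm _ _
  rw [expMonomial_coeff_derivative_fSeries c hm0]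
  push_cast [Finsupp.sum]
  rw [hM1, logCoeff, degree_apply]
  ring
end
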